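/- arXiv:1507.02546 — 6 statements merged into one kernel-verified Lean document; each statement's English description precedes it below -/
import Mathlib

section
/- Let G be a finite connected simple graph with ε ≥ 1 edges and let Γ_G be its edge-set graph. Then the maximum degree of Γ_G equals 2(2^{ε−1} − 1), i.e., Δ(Γ_G) = 2^ε − 2. -/
open scoped Classical

/-- Two edges (as elements of `Sym2 V`) are *adjacent* if they are distinct and
share a common endpoint. -/
def EdgeAdj {V : Type*} (e f : Sym2 V) : Prop := e ≠ f ∧ ∃ v, v ∈ e ∧ v ∈ f

lemma EdgeAdj.symm {V : Type*} {e f : Sym2 V} (h : EdgeAdj e f) : EdgeAdj f e :=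
  ⟨h.1.symm, h.2.elim fun v hv => ⟨v, hv.2, hv.1⟩⟩

/-- The *edge-set graph* of a simple graph `G`: its vertices are the nonempty
(finite) subsets of the edge set of `G`, two distinct such subsets being adjacent
if and only if some edge in the first is adjacent to some edge in the second. -/
def edgeSetGraph {V : Type*} (G : SimpleGraph V) :
    SimpleGraph {S : Finset (Sym2 V) // ↑S ⊆ G.edgeSet ∧ S.Nonempty} where
  Adj A B := A ≠ B ∧ ∃ e ∈ A.1, ∃ f ∈ B.1, EdgeAdj e f
  symm := by
    constructor
    rintro A B ⟨hAB, e, he, f, hf, hef⟩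
    exact ⟨hAB.symm, f, hf, e, he, hef.symm⟩
  loopless := by constructor; rintro A ⟨h, -⟩; exact h rfl

/-!
The whole edge set `E(G)` is a vertex of `Γ_G` adjacent to every other vertex `S`: an edge of
`E(G) \ S` witnesses that `G` has at least two edges, so by connectivity any edge of `S` is
adjacent to some edge of `G`, i.e. of `E(G)`. Since `Γ_G` has `2^ε - 1` vertices, this universal
vertex has the largest possible degree `2^ε - 2`.
-/

open Finset

namespace SimpleGraph

variable {V : Type*}

lemma IsUniversal.maxDegree_eq [Fintype V] {G : SimpleGraph V} [DecidableRel G.Adj] {v : V}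
    (hv : G.IsUniversal v) : G.maxDegree = Fintype.card V - 1 := by
  have : Nonempty V := ⟨v⟩
  have hlt := G.maxDegree_lt_card_verts
  have hle := G.degree_le_maxDegree v
  have hdeg := (G.degree_eq_card_sub_one v).2 hv
  omega

-- A walk from `e` to an endpoint of `f` outside `e` has a first edge leaving `e`.
lemma Connected.exists_edgeAdj {G : SimpleGraph V} (hG : G.Connected) (e : Sym2 V) {f : Sym2 V}
    (hf : f ∈ G.edgeSet) (hfe : f ≠ e) : ∃ g ∈ G.edgeSet, EdgeAdj e g := by
  by_cases hfx : f.out.1 ∈ e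
  · exact ⟨f, hf, hfe.symm, f.out.1, hfx, f.out_fst_mem⟩
  obtain ⟨p⟩ := hG.preconnected e.out.1 f.out.1
  obtain ⟨d, -, hd₁, hd₂⟩ := p.exists_boundary_dart {w | w ∈ e} e.out_fst_mem hfx
  refine ⟨d.edge, d.edge_mem, ?_, d.fst, hd₁, Sym2.mem_mk_left _ _⟩
  rintro rfl
  exact hd₂ (Sym2.mem_mk_right _ _)

end SimpleGraph

section edgeSetGraph

variable {V : Type*} [Fintype V] (G : SimpleGraph V)

lemma card_edgeSetGraph_verts :
    Fintype.card {S : Finset (Sym2 V) // ↑S ⊆ G.edgeSet ∧ S.Nonempty} = 2 ^ #G.edgeFinset - 1 := by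
  rw [Fintype.card_subtype]
  have : ({S : Finset (Sym2 V) | ↑S ⊆ G.edgeSet ∧ S.Nonempty} : Finset _) =
      G.edgeFinset.powerset.erase ∅ := by
    ext S
    simp [nonempty_iff_ne_empty, and_comm, Set.subset_def, subset_iff]
  rw [this, card_erase_of_mem (empty_mem_powerset _), card_powerset]

lemma edgeSetGraph_isUniversal (hG : G.Connected)
    (A : {S : Finset (Sym2 V) // ↑S ⊆ G.edgeSet ∧ S.Nonempty}) (hA : A.1 = G.edgeFinset) :
    (edgeSetGraph G).IsUniversal A := by
  intro B hAB
  obtain ⟨f, hfB⟩ := B.2.2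
  have hB : B.1 ⊂ G.edgeFinset := by
    refine (subset_iff.2 fun e he => G.mem_edgeFinset.2 (B.2.1 he)).ssubset_of_ne ?_
    exact fun h => hAB (Subtype.ext (hA.trans h.symm))
  obtain ⟨g, hg, hgB⟩ := exists_of_ssubset hB
  obtain ⟨h, hh, hfh⟩ :=
    hG.exists_edgeAdj f (G.mem_edgeFinset.1 hg) fun hgf => hgB (hgf ▸ hfB)
  exact ⟨hAB, h, hA ▸ G.mem_edgeFinset.2 hh, f, hfB, hfh.symm⟩

end edgeSetGraph

/-- For a finite connected simple graph `G` with `ε ≥ 1` edges, the maximum degree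
of the edge-set graph `Γ_G` equals `2(2^(ε-1) - 1) = 2^ε - 2`. -/
theorem stmt_1 {V : Type*} [Fintype V] (G : SimpleGraph V) (hconn : G.Connected)
    (hE : 1 ≤ G.edgeFinset.card) :
    (edgeSetGraph G).maxDegree = 2 * (2 ^ (G.edgeFinset.card - 1) - 1) := by
  let A : {S : Finset (Sym2 V) // ↑S ⊆ G.edgeSet ∧ S.Nonempty} :=
    ⟨G.edgeFinset, by simp, card_pos.mp hE⟩
  rw [(edgeSetGraph_isUniversal G hconn A rfl).maxDegree_eq, card_edgeSetGraph_verts]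
  obtain ⟨k, hk⟩ := Nat.exists_eq_add_of_le' hE
  have : 1 ≤ 2 ^ k := Nat.one_le_two_pow
  rw [hk, pow_succ, Nat.add_sub_cancel]
  omega
end

section
/- Let G be a finite connected simple graph with ε ≥ 4 edges. If the edge-set graph Γ_G of G is a complete graph, then G is isomorphic to the star graph K_{1,ε}. -/
open scoped Classical

/-- The star graph `K_{1,n}`: one central vertex `0` joined to `n` leaves. -/
def starGraph (n : ℕ) : SimpleGraph (Fin (n + 1)) where
  Adj u v := u ≠ v ∧ (u = 0 ∨ v = 0)
  symm := by constructor; rintro u v ⟨h1, h2⟩; exact ⟨h1.symm, h2.symm⟩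
  loopless := by constructor; rintro u ⟨h, -⟩; exact h rfl

/-! Completeness of the edge-set graph, tested on singletons, says that any two edges of `G`
share a vertex. A pairwise intersecting family of edges without a common vertex lies in a
triangle, so with at least four edges some vertex `c` lies on every edge; connectivity then
joins every other vertex to `c`, and `G` is the star centred at `c`. -/

theorem EdgeAdj.mem_of_notMem {V : Type*} {a c : V} {e : Sym2 V} (h : EdgeAdj s(c, a) e)
    (hc : c ∉ e) : a ∈ e := by
  obtain ⟨v, hv, hve⟩ := h.2
  rcases Sym2.mem_iff.1 hv with rfl | rfl
  · exact absurd hve hc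
  · exact hve

namespace SimpleGraph

variable {V : Type*} {G : SimpleGraph V}

theorem pairwise_edgeAdj_of_edgeSetGraph_eq_top (h : edgeSetGraph G = ⊤) :
    G.edgeSet.Pairwise EdgeAdj := by
  intro e he f hf hef
  have hadj : (edgeSetGraph G).Adj ⟨{e}, by simpa using he, by simp⟩
      ⟨{f}, by simpa using hf, by simp⟩ := by
    rw [h]
    simpa [Subtype.ext_iff] using hef
  obtain ⟨-, e', he', f', hf', hef'⟩ := hadj
  rw [Finset.mem_singleton] at he' hf'
  rwa [he', hf'] at hef'

theorem exists_forall_mem_of_pairwise_edgeAdj [Fintype V] (hpair : G.edgeSet.Pairwise EdgeAdj)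
    (hcard : 3 < G.edgeFinset.card) : ∃ c, ∀ e ∈ G.edgeSet, c ∈ e := by
  obtain ⟨e₁, he₁, e₂, he₂, h₁₂⟩ := Finset.one_lt_card.1 (by omega : 1 < G.edgeFinset.card)
  rw [mem_edgeFinset] at he₁ he₂
  obtain ⟨-, c, hc₁, hc₂⟩ := hpair he₁ he₂ h₁₂
  by_contra! hmiss
  obtain ⟨a, rfl⟩ := Sym2.mem_iff_exists.1 hc₁
  obtain ⟨b, rfl⟩ := Sym2.mem_iff_exists.1 hc₂
  have hca : c ≠ a := G.ne_of_adj he₁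
  have hcb : c ≠ b := G.ne_of_adj he₂
  have hab : a ≠ b := by rintro rfl; exact h₁₂ rfl
  -- an edge avoiding `c` must meet both `s(c, a)` and `s(c, b)`, so it is the third side
  have hside : ∀ e ∈ G.edgeSet, c ∉ e → e = s(a, b) := fun e he hce =>
    (Sym2.mem_and_mem_iff hab).1
      ⟨(hpair he₁ he (by rintro rfl; simp at hce)).mem_of_notMem hce,
        (hpair he₂ he (by rintro rfl; simp at hce)).mem_of_notMem hce⟩
  obtain ⟨f, hf, hcf⟩ := hmiss c
  obtain rfl := hside f hf hcf
  have hsub : G.edgeFinset ⊆ {s(c, a), s(c, b), s(a, b)} := by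
    intro e he
    rw [mem_edgeFinset] at he
    by_cases hce : c ∈ e
    · have hea : e ≠ s(a, b) := by rintro rfl; exact hcf hce
      obtain ⟨-, v, hve, hv⟩ := hpair he hf hea
      rcases Sym2.mem_iff.1 hv with rfl | rfl
      · simp [(Sym2.mem_and_mem_iff hca).1 ⟨hce, hve⟩]
      · simp [(Sym2.mem_and_mem_iff hcb).1 ⟨hce, hve⟩]
    · simp [hside e he hce]
  have := (Finset.card_le_card hsub).trans Finset.card_le_three
  omega

theorem eq_starGraph_of_forall_mem (hconn : G.Preconnected) {c : V}
    (hc : ∀ e ∈ G.edgeSet, c ∈ e) : G = starGraph c := by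
  have hcenter : ∀ {u v}, G.Adj u v → u = c ∨ v = c := fun {u v} huv => by
    simpa [eq_comm] using hc s(u, v) huv
  have hadj : ∀ v, v ≠ c → G.Adj v c := fun v hv => by
    obtain ⟨p⟩ := hconn v c
    cases p with
    | nil => exact absurd rfl hv
    | cons h _ => exact (hcenter h).resolve_left hv ▸ h
  ext u v
  rw [starGraph_adj]
  refine ⟨fun huv => ⟨huv.ne, hcenter huv⟩, ?_⟩
  rintro ⟨huv, rfl | rfl⟩
  · exact (hadj v huv.symm).symm
  · exact hadj u huv

theorem mem_of_mem_edgeSet_starGraph {c : V} {e : Sym2 V} (he : e ∈ (starGraph c).edgeSet) :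
    c ∈ e := by
  induction e using Sym2.ind with
  | h u v => rw [mem_edgeSet, starGraph_adj] at he; aesop

theorem card_edgeFinset_starGraph [Fintype V] (c : V) :
    (starGraph c).edgeFinset.card + 1 = Fintype.card V := by
  have hinc : (starGraph c).incidenceFinset c = (starGraph c).edgeFinset := by
    ext e
    rw [mem_incidenceFinset, mem_edgeFinset]
    exact ⟨And.left, fun he => ⟨he, mem_of_mem_edgeSet_starGraph he⟩⟩
  rw [← hinc, card_incidenceFinset_eq_degree, degree_starGraph_center]
  have := Fintype.card_pos_iff.2 ⟨c⟩
  omega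

def Iso.starGraph {W : Type*} (φ : V ≃ W) (c : V) : starGraph c ≃g starGraph (φ c) :=
  ⟨φ, by simp⟩

theorem starGraph_zero_fin (n : ℕ) : starGraph (0 : Fin (n + 1)) = _root_.starGraph n := by
  ext u v
  simp [_root_.starGraph]

theorem nonempty_iso_starGraph_fin [Fintype V] {n : ℕ} (hn : Fintype.card V = n + 1) (c : V) :
    Nonempty (starGraph c ≃g _root_.starGraph n) := by
  let φ := (Fintype.equivFinOfCardEq hn).trans (Equiv.swap (Fintype.equivFinOfCardEq hn c) 0)
  have hφ : φ c = 0 := by simp [φ]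
  rw [← starGraph_zero_fin, ← hφ]
  exact ⟨Iso.starGraph φ c⟩

end SimpleGraph

/-- If `G` is a finite connected simple graph with `ε ≥ 4` edges whose edge-set graph
is complete, then `G` is isomorphic to the star graph `K_{1,ε}`. -/
theorem stmt_4 {V : Type*} [Fintype V] (G : SimpleGraph V) (hconn : G.Connected)
    (hE : 4 ≤ G.edgeFinset.card) (hcomplete : edgeSetGraph G = ⊤) :
    Nonempty (G ≃g starGraph G.edgeFinset.card) := by
  obtain ⟨c, hc⟩ := G.exists_forall_mem_of_pairwise_edgeAdj
    (G.pairwise_edgeAdj_of_edgeSetGraph_eq_top hcomplete) hE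
  obtain rfl := G.eq_starGraph_of_forall_mem hconn.preconnected hc
  -- `convert` bridges the classical and the computable `Fintype` instances on the edge set
  convert SimpleGraph.nonempty_iso_starGraph_fin (SimpleGraph.card_edgeFinset_starGraph c).symm c
end

section
/- Let G be a finite connected simple graph with ε ≥ 2 edges, let X be a connected edge dominating set of G, and let Γ_G be the edge-set graph of G. Then every vertex of Γ_G corresponding to an edge-subset S with X ⊆ S has degree equal to the maximum degree Δ(Γ_G); equivalently, every such vertex is adjacent in Γ_G to all other vertices. -/
/-
Every edge-subset `T` outside `S` meets the neighbourhood of `S`: an edge of `T` not in `X` is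
dominated by an edge of `X ⊆ S`; an edge `f ∈ T ∩ X` has a neighbour in `X` by connectivity
of `X`, unless `X = {f}`, in which case `T = {f}` and any edge of `S ≠ T` other than `f` is
dominated by `f`. So `S` is a universal vertex of `Γ_G`, and universal vertices have maximum
degree.
-/

open scoped Classical

/-- The edge set `X` induces a connected subgraph: the graph on the endpoints of
edges of `X`, with edge set `X`, is connected. -/
def IsConnectedEdgeSet {V : Type*} (X : Set (Sym2 V)) : Prop :=
  ((SimpleGraph.fromEdgeSet X).induce {v | ∃ e ∈ X, v ∈ e}).Connected

/-- `X` is a *connected edge dominating set* of `G`: a set of edges of `G` such that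
every edge of `G` not in `X` is adjacent to some edge of `X`, and the subgraph of `G`
induced by the edge set `X` is connected. -/
def IsCEDS {V : Type*} (G : SimpleGraph V) (X : Finset (Sym2 V)) : Prop :=
  ↑X ⊆ G.edgeSet ∧ (∀ e ∈ G.edgeSet, e ∉ X → ∃ f ∈ X, EdgeAdj e f) ∧
    IsConnectedEdgeSet (X : Set (Sym2 V))

/-- `X` is a connected edge dominating set of `G` of minimum cardinality. -/
def IsMinCEDS {V : Type*} (G : SimpleGraph V) (X : Finset (Sym2 V)) : Prop :=
  IsCEDS G X ∧ ∀ Y : Finset (Sym2 V), IsCEDS G Y → X.card ≤ Y.card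

namespace SimpleGraph

theorem IsUniversal.degree_eq_maxDegree {W : Type*} [Fintype W] {H : SimpleGraph W}
    [DecidableRel H.Adj] {v : W} (hv : H.IsUniversal v) : H.degree v = H.maxDegree := by
  refine le_antisymm (H.degree_le_maxDegree v) (H.maxDegree_le_of_forall_degree_le _ fun w => ?_)
  rw [(H.degree_eq_card_sub_one v).mpr hv]
  exact Nat.le_sub_one_of_lt (H.degree_lt_card_verts w)

end SimpleGraph

section EdgeSets

variable {V : Type*}

theorem mem_of_walk_induce_fromEdgeSet {X : Set (Sym2 V)} {f : Sym2 V}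
    (hf : ∀ e ∈ X, ∀ v ∈ e, v ∈ f → e = f) {U : Set V} {u w : U}
    (p : ((SimpleGraph.fromEdgeSet X).induce U).Walk u w) (hu : (u : V) ∈ f) : (w : V) ∈ f := by
  induction p with
  | nil => exact hu
  | @cons a b c hab _ ih =>
    have habX : s((a : V), b) ∈ X := hab.1
    apply ih
    rw [← hf _ habX a (Sym2.mem_mk_left _ _) hu]
    exact Sym2.mem_mk_right _ _

theorem IsConnectedEdgeSet.exists_edgeAdj {X : Set (Sym2 V)} (hX : IsConnectedEdgeSet X)
    {f g : Sym2 V} (hf : f ∈ X) (hg : g ∈ X) (hgf : g ≠ f) : ∃ e ∈ X, EdgeAdj e f := by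
  by_contra! hno
  have hmeets : ∀ e ∈ X, ∀ v ∈ e, v ∈ f → e = f := fun e he v hve hvf => by
    by_contra hef
    exact hno e he ⟨hef, v, hve, hvf⟩
  obtain ⟨p⟩ :=
    hX.preconnected ⟨f.out.1, f, hf, f.out_fst_mem⟩ ⟨g.out.1, g, hg, g.out_fst_mem⟩
  have hgf_meet : g.out.1 ∈ f := mem_of_walk_induce_fromEdgeSet hmeets p f.out_fst_mem
  exact hno g hg ⟨hgf, g.out.1, g.out_fst_mem, hgf_meet⟩

theorem IsCEDS.exists_edgeAdj {G : SimpleGraph V} {X S T : Finset (Sym2 V)} (hX : IsCEDS G X)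
    (hXS : X ⊆ S) (hSG : ↑S ⊆ G.edgeSet) (hTG : ↑T ⊆ G.edgeSet) (hT : T.Nonempty)
    (hST : S ≠ T) : ∃ e ∈ S, ∃ f ∈ T, EdgeAdj e f := by
  obtain ⟨-, hdom, hconn⟩ := hX
  by_cases hTX : T ⊆ X
  · obtain ⟨f, hfT⟩ := hT
    have hfX : f ∈ X := hTX hfT
    by_cases hXf : ∃ g ∈ X, g ≠ f
    · obtain ⟨g, hgX, hgf⟩ := hXf
      obtain ⟨e, heX, hef⟩ := hconn.exists_edgeAdj (Finset.mem_coe.mpr hfX)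
        (Finset.mem_coe.mpr hgX) hgf
      exact ⟨e, hXS heX, f, hfT, hef⟩
    · push Not at hXf
      have hXeq : X = {f} := Finset.eq_singleton_iff_unique_mem.mpr ⟨hfX, hXf⟩
      have hTeq : T = {f} :=
        Finset.eq_singleton_iff_unique_mem.mpr ⟨hfT, fun x hx => hXf x (hTX hx)⟩
      obtain ⟨e, heS, heT⟩ := Finset.exists_of_ssubset
        (lt_of_le_of_ne (hTeq ▸ hXeq ▸ hXS) (Ne.symm hST))
      have heX : e ∉ X := hXeq ▸ hTeq ▸ heT
      obtain ⟨g, hgX, heg⟩ := hdom e (hSG heS) heX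
      exact ⟨e, heS, f, hfT, hXf g hgX ▸ heg⟩
  · obtain ⟨f, hfT, hfX⟩ := Finset.not_subset.mp hTX
    obtain ⟨g, hgX, hfg⟩ := hdom f (hTG hfT) hfX
    exact ⟨g, hXS hgX, f, hfT, hfg.symm⟩

end EdgeSets

theorem stmt_7_general {V : Type*} [Fintype V] (G : SimpleGraph V)
    (X : Finset (Sym2 V)) (hX : IsCEDS G X)
    (S : {S : Finset (Sym2 V) // ↑S ⊆ G.edgeSet ∧ S.Nonempty}) (hXS : X ⊆ S.1) :
    (edgeSetGraph G).degree S = (edgeSetGraph G).maxDegree ∧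
      ∀ T, T ≠ S → (edgeSetGraph G).Adj S T := by
  have huniv : (edgeSetGraph G).IsUniversal S := fun T hST =>
    ⟨hST, hX.exists_edgeAdj hXS S.2.1 T.2.1 T.2.2 (Subtype.coe_ne_coe.mpr hST)⟩
  exact ⟨huniv.degree_eq_maxDegree, fun T hT => huniv hT.symm⟩

/-- Let `X` be a connected edge dominating set of a finite connected simple graph `G`
with `ε ≥ 2` edges.  Then every vertex of the edge-set graph `Γ_G` corresponding to an
edge-subset `S ⊇ X` has degree `Δ(Γ_G)`; equivalently, every such vertex is adjacent
to all other vertices of `Γ_G`. -/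
theorem stmt_7 {V : Type*} [Fintype V] (G : SimpleGraph V) (hconn : G.Connected)
    (hE : 2 ≤ G.edgeFinset.card) (X : Finset (Sym2 V)) (hX : IsCEDS G X)
    (S : {S : Finset (Sym2 V) // ↑S ⊆ G.edgeSet ∧ S.Nonempty}) (hXS : X ⊆ S.1) :
    (edgeSetGraph G).degree S = (edgeSetGraph G).maxDegree ∧
      ∀ T, T ≠ S → (edgeSetGraph G).Adj S T :=
  stmt_7_general G X hX S hXS
end

section
/- Let G be a finite simple graph with ε edges and let e_i be an edge of G with edge-degree d(e_i). Then the vertex of the edge-set graph Γ_G corresponding to the singleton subset {e_i} has degree 2^ε − 2^{ε − d(e_i)} in Γ_G. -/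
open scoped Classical

/-- The *edge-degree* of an edge `e` of `G`: the number of edges of `G` adjacent
to `e` (for `e = uv ∈ E(G)` this equals `d_G(u) + d_G(v) - 2`). -/
noncomputable def edgeDegree {V : Type*} [Fintype V] (G : SimpleGraph V) (e : Sym2 V) : ℕ :=
  (G.edgeFinset.filter (fun f => EdgeAdj e f)).card

/-! The neighbours of `{e}` in `Γ_G` are exactly the nonempty edge sets meeting the set `D` of
edges adjacent to `e`. The edge sets avoiding `D` are the subsets of `E(G) \ D`, so there are
`2^ε - 2^(ε - d(e))` edge sets meeting `D`; each is nonempty and differs from `{e}`, since no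
edge is adjacent to itself. -/

open Finset

theorem Finset.card_filter_not_disjoint_powerset {α : Type*} [DecidableEq α] {U D : Finset α}
    (hD : D ⊆ U) :
    #{S ∈ U.powerset | ¬Disjoint S D} = 2 ^ #U - 2 ^ (#U - #D) := by
  have hdisj : #{S ∈ U.powerset | Disjoint S D} = 2 ^ (#U - #D) := by
    rw [← card_sdiff_of_subset hD, ← card_powerset]
    congr 1
    ext S
    simp only [mem_filter, mem_powerset, subset_sdiff]
  have hsplit := card_filter_add_card_filter_not (s := U.powerset) (fun S => Disjoint S D)
  rw [card_powerset, hdisj] at hsplit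
  omega

theorem edgeSetGraph_degree_eq_card {V : Type*} [Fintype V] {G : SimpleGraph V}
    (A : {S : Finset (Sym2 V) // ↑S ⊆ G.edgeSet ∧ S.Nonempty}) :
    (edgeSetGraph G).degree A =
      #{S ∈ G.edgeFinset.powerset | S ≠ A.1 ∧ ∃ e ∈ A.1, ∃ f ∈ S, EdgeAdj e f} := by
  rw [← SimpleGraph.card_neighborFinset_eq_degree,
    ← card_map (Function.Embedding.subtype _)]
  congr 1
  ext S
  simp only [mem_map, SimpleGraph.mem_neighborFinset, Function.Embedding.subtype_apply,
    mem_filter, mem_powerset]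
  constructor
  · rintro ⟨B, ⟨hBA, hadj⟩, rfl⟩
    exact ⟨fun f hf => G.mem_edgeFinset.2 (B.2.1 hf), fun h => hBA (Subtype.ext h).symm, hadj⟩
  · rintro ⟨hSG, hSA, hadj⟩
    obtain ⟨-, -, f, hf, -⟩ := id hadj
    refine ⟨⟨S, fun g hg => G.mem_edgeFinset.1 (hSG hg), f, hf⟩, ⟨fun h => hSA ?_, hadj⟩, rfl⟩
    rw [h]

/-- For a finite simple graph `G` with `ε` edges and an edge `e` of `G` of
edge-degree `d(e)`, the vertex of the edge-set graph `Γ_G` corresponding to the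
singleton `{e}` has degree `2^ε - 2^(ε - d(e))` in `Γ_G`. -/
theorem stmt_15 {V : Type*} [Fintype V] (G : SimpleGraph V)
    (e : Sym2 V) (he : e ∈ G.edgeSet) :
    (edgeSetGraph G).degree ⟨{e}, by simpa using he, Finset.singleton_nonempty e⟩ =
      2 ^ G.edgeFinset.card - 2 ^ (G.edgeFinset.card - edgeDegree G e) := by
  rw [edgeSetGraph_degree_eq_card, edgeDegree,
    ← card_filter_not_disjoint_powerset (filter_subset _ G.edgeFinset)]
  refine congrArg card (filter_congr fun S hS => ?_)
  simp only [mem_singleton, exists_eq_left, not_disjoint_iff, mem_filter]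
  constructor
  · rintro ⟨-, f, hf, hef⟩
    exact ⟨f, hf, mem_powerset.1 hS hf, hef⟩
  · rintro ⟨f, hf, -, hef⟩
    exact ⟨fun hSe => hef.1 (mem_singleton.1 (hSe ▸ hf)).symm, f, hf, hef⟩
end

section
/- Let G be a finite connected r-regular simple graph on ν vertices with r ≥ 2, so that G has ε = rν/2 edges. Then in the edge-set graph Γ_G, every vertex corresponding to a singleton subset {e}, e ∈ E(G), has the same degree, equal to 2^{rν/2} − 2^{rν/2 − 2(r−1)}, and this common value equals the minimum degree δ(Γ_G). -/
open scoped Classical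

/-!
For a vertex `A` of `Γ_G` let `N(A)` be the set of edges of `G` adjacent to some edge of `A`.
The neighbours of `A` are exactly the sets of edges meeting `N(A)`, other than `A` itself,
so `deg A = 2^ε - 2^(ε - |N(A)|)`, minus one if `A` meets `N(A)`. In an `r`-regular graph
`|N({e})| = 2(r-1)` and `e ∉ N({e})`, which gives the degree of a singleton. For arbitrary `A`,
`N(A) ⊇ N({e})` for any `e ∈ A`; and if some `f ∈ A` lies in `N(A)`, then `N(A) ⊇ {f} ∪ N({f})`
has at least `2r - 1` elements, which more than pays for the lost `1`.
-/

open Finset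

lemma Finset.card_filter_powerset_inter_nonempty {α : Type*} [DecidableEq α] {E N : Finset α}
    (hN : N ⊆ E) :
    #{T ∈ E.powerset | (T ∩ N).Nonempty} = 2 ^ #E - 2 ^ (#E - #N) := by
  have hmiss : {T ∈ E.powerset | ¬(T ∩ N).Nonempty} = (E \ N).powerset := by
    ext T
    simp [subset_sdiff, not_nonempty_iff_eq_empty, ← disjoint_iff_inter_eq_empty]
  have hsplit := card_filter_add_card_filter_not (s := E.powerset)
    (p := fun T => (T ∩ N).Nonempty)
  rw [hmiss, card_powerset, card_powerset, card_sdiff_of_subset hN] at hsplit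
  omega

lemma two_pow_sub_two_pow_sub_le_pred {d n m : ℕ} (hdn : d < n) (hnm : n ≤ m) :
    2 ^ m - 2 ^ (m - d) ≤ 2 ^ m - 2 ^ (m - n) - 1 := by
  have h₁ : 2 ^ (m - n) * 2 ≤ 2 ^ (m - d) := by
    rw [← pow_succ]; exact Nat.pow_le_pow_right two_pos (by omega)
  have h₂ : 2 ^ (m - d) ≤ 2 ^ m := Nat.pow_le_pow_right two_pos (by omega)
  have h₃ : 1 ≤ 2 ^ (m - n) := Nat.one_le_two_pow
  omega

lemma two_pow_sub_two_pow_sub_mono {d n m : ℕ} (hdn : d ≤ n) :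
    2 ^ m - 2 ^ (m - d) ≤ 2 ^ m - 2 ^ (m - n) :=
  Nat.sub_le_sub_left (Nat.pow_le_pow_right two_pos (by omega)) _

namespace SimpleGraph

variable {V : Type*} [Fintype V] (G : SimpleGraph V)

noncomputable def adjacentEdges (S : Finset (Sym2 V)) : Finset (Sym2 V) :=
  {f ∈ G.edgeFinset | ∃ e ∈ S, EdgeAdj e f}

variable {G}

lemma mem_adjacentEdges {S : Finset (Sym2 V)} {f : Sym2 V} :
    f ∈ G.adjacentEdges S ↔ f ∈ G.edgeFinset ∧ ∃ e ∈ S, EdgeAdj e f :=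
  mem_filter

lemma adjacentEdges_subset (S : Finset (Sym2 V)) : G.adjacentEdges S ⊆ G.edgeFinset :=
  filter_subset _ _

lemma adjacentEdges_mono {S T : Finset (Sym2 V)} (h : S ⊆ T) :
    G.adjacentEdges S ⊆ G.adjacentEdges T := fun _ hf =>
  have ⟨hfE, e, he, hef⟩ := mem_adjacentEdges.1 hf
  mem_adjacentEdges.2 ⟨hfE, e, h he, hef⟩

lemma notMem_adjacentEdges_singleton (e : Sym2 V) : e ∉ G.adjacentEdges {e} := by
  simp [mem_adjacentEdges, EdgeAdj]

lemma adjacentEdges_singleton_eq (u v : V) :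
    G.adjacentEdges {s(u, v)} = (G.incidenceFinset u ∪ G.incidenceFinset v).erase s(u, v) := by
  ext f
  simp only [mem_adjacentEdges, EdgeAdj, mem_singleton, exists_eq_left, mem_erase, mem_union,
    mem_incidenceFinset, mem_edgeFinset, incidenceSet, Set.mem_ofPred_eq, Sym2.mem_iff,
    exists_eq_or_imp]
  tauto

lemma card_adjacentEdges_singleton {u v : V} (h : G.Adj u v) :
    #(G.adjacentEdges {s(u, v)}) = G.degree u + G.degree v - 2 := by
  have hinter : G.incidenceFinset u ∩ G.incidenceFinset v = {s(u, v)} := by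
    rw [incidenceFinset, incidenceFinset, ← Set.toFinset_inter,
      Set.toFinset_congr (G.incidenceSet_inter_incidenceSet_of_adj h), Set.toFinset_singleton]
  have hmem : s(u, v) ∈ G.incidenceFinset u ∪ G.incidenceFinset v :=
    mem_union_left _ ((G.mem_incidenceFinset _ _).2 (G.mk'_mem_incidenceSet_left_iff.2 h))
  have hunion := card_union_add_card_inter (G.incidenceFinset u) (G.incidenceFinset v)
  rw [hinter, card_singleton, card_incidenceFinset_eq_degree,
    card_incidenceFinset_eq_degree] at hunion
  rw [adjacentEdges_singleton_eq, card_erase_of_mem hmem]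
  omega

lemma IsRegularOfDegree.card_adjacentEdges_singleton {r : ℕ} (hreg : G.IsRegularOfDegree r)
    {e : Sym2 V} (he : e ∈ G.edgeSet) : #(G.adjacentEdges {e}) = 2 * r - 2 := by
  induction e with
  | _ u v => rw [SimpleGraph.card_adjacentEdges_singleton he, hreg u, hreg v]; omega

lemma IsRegularOfDegree.two_mul_card_edgeFinset {r : ℕ} (hreg : G.IsRegularOfDegree r) :
    2 * #G.edgeFinset = r * Fintype.card V := by
  rw [← G.sum_degrees_eq_twice_card_edges, sum_congr rfl fun v _ => hreg v, sum_const,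
    card_univ, smul_eq_mul, mul_comm]

lemma edgeSetGraph_degree (A : {S : Finset (Sym2 V) // ↑S ⊆ G.edgeSet ∧ S.Nonempty}) :
    (edgeSetGraph G).degree A =
      #({T ∈ G.edgeFinset.powerset | (T ∩ G.adjacentEdges A.1).Nonempty}.erase A.1) := by
  rw [← card_neighborFinset_eq_degree, ← card_map (Function.Embedding.subtype _)]
  congr 1
  ext T
  simp only [mem_map, Function.Embedding.coe_subtype, mem_neighborFinset, mem_erase, mem_filter,
    mem_powerset]
  constructor
  · rintro ⟨B, ⟨hAB, e, he, f, hf, hef⟩, rfl⟩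
    have hBE : B.1 ⊆ G.edgeFinset := fun x hx => mem_edgeFinset.2 (B.2.1 hx)
    exact ⟨fun h => hAB (Subtype.ext h.symm), hBE, f,
      mem_inter.2 ⟨hf, mem_adjacentEdges.2 ⟨hBE hf, e, he, hef⟩⟩⟩
  · rintro ⟨hTA, hTE, f, hf⟩
    obtain ⟨hfT, hfN⟩ := mem_inter.1 hf
    obtain ⟨-, e, he, hef⟩ := mem_adjacentEdges.1 hfN
    exact ⟨⟨T, fun x hx => mem_edgeFinset.1 (hTE hx), f, hfT⟩,
      ⟨fun h => hTA (congrArg Subtype.val h).symm, e, he, f, hfT, hef⟩, rfl⟩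

lemma IsRegularOfDegree.edgeSetGraph_degree_singleton {r : ℕ} (hreg : G.IsRegularOfDegree r)
    {e : Sym2 V} (he : e ∈ G.edgeSet) :
    (edgeSetGraph G).degree ⟨{e}, by simpa using he, singleton_nonempty e⟩ =
      2 ^ #G.edgeFinset - 2 ^ (#G.edgeFinset - (2 * r - 2)) := by
  have hnot : {e} ∉ {T ∈ G.edgeFinset.powerset | (T ∩ G.adjacentEdges {e}).Nonempty} := by
    simp [notMem_adjacentEdges_singleton]
  rw [edgeSetGraph_degree, erase_eq_of_notMem hnot,
    card_filter_powerset_inter_nonempty (adjacentEdges_subset _),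
    hreg.card_adjacentEdges_singleton he]

lemma IsRegularOfDegree.le_edgeSetGraph_degree {r : ℕ} (hreg : G.IsRegularOfDegree r)
    (A : {S : Finset (Sym2 V) // ↑S ⊆ G.edgeSet ∧ S.Nonempty}) :
    2 ^ #G.edgeFinset - 2 ^ (#G.edgeFinset - (2 * r - 2)) ≤ (edgeSetGraph G).degree A := by
  set N := G.adjacentEdges A.1
  have hNE : #N ≤ #G.edgeFinset := card_le_card (adjacentEdges_subset _)
  have hcount := card_filter_powerset_inter_nonempty (adjacentEdges_subset (G := G) A.1)
  rw [edgeSetGraph_degree]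
  by_cases hA : (A.1 ∩ N).Nonempty
  · obtain ⟨f, hf⟩ := hA
    obtain ⟨hfA, hfN⟩ := mem_inter.1 hf
    have hsub : insert f (G.adjacentEdges {f}) ⊆ N :=
      insert_subset hfN (adjacentEdges_mono (singleton_subset_iff.2 hfA))
    have hN : 2 * r - 2 < #N := by
      have := card_le_card hsub
      rw [card_insert_of_notMem (notMem_adjacentEdges_singleton f),
        hreg.card_adjacentEdges_singleton (A.2.1 hfA)] at this
      omega
    calc 2 ^ #G.edgeFinset - 2 ^ (#G.edgeFinset - (2 * r - 2))
        ≤ 2 ^ #G.edgeFinset - 2 ^ (#G.edgeFinset - #N) - 1 :=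
          two_pow_sub_two_pow_sub_le_pred hN hNE
      _ = #{T ∈ G.edgeFinset.powerset | (T ∩ N).Nonempty} - 1 := by rw [hcount]
      _ ≤ _ := pred_card_le_card_erase
  · obtain ⟨e, he⟩ := A.2.2
    have hN : 2 * r - 2 ≤ #N := by
      rw [← hreg.card_adjacentEdges_singleton (A.2.1 he)]
      exact card_le_card (adjacentEdges_mono (singleton_subset_iff.2 he))
    have hnot : A.1 ∉ {T ∈ G.edgeFinset.powerset | (T ∩ N).Nonempty} :=
      fun h => hA (mem_filter.1 h).2
    rw [erase_eq_of_notMem hnot, hcount]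
    exact two_pow_sub_two_pow_sub_mono hN

end SimpleGraph

/-- Let `G` be a finite connected `r`-regular simple graph on `ν` vertices, `r ≥ 2`,
so that `G` has `ε = rν/2` edges.  In the edge-set graph `Γ_G`, every vertex
corresponding to a singleton `{e}`, `e ∈ E(G)`, has the same degree
`2^(rν/2) - 2^(rν/2 - 2(r-1))`, and this common value is the minimum degree
`δ(Γ_G)`. -/
theorem stmt_16 {V : Type*} [Fintype V] (G : SimpleGraph V)
    (r : ℕ) (hreg : G.IsRegularOfDegree r) :
    G.edgeFinset.card = r * Fintype.card V / 2 ∧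
    ∀ e (he : e ∈ G.edgeSet),
      (edgeSetGraph G).degree ⟨{e}, by simpa using he, Finset.singleton_nonempty e⟩ =
        2 ^ (r * Fintype.card V / 2) -
          2 ^ (r * Fintype.card V / 2 - 2 * (r - 1)) ∧
      (edgeSetGraph G).degree ⟨{e}, by simpa using he, Finset.singleton_nonempty e⟩ =
        (edgeSetGraph G).minDegree := by
  have hcard : #G.edgeFinset = r * Fintype.card V / 2 := by
    have := hreg.two_mul_card_edgeFinset
    omega
  refine ⟨hcard, fun e he => ⟨?_, ?_⟩⟩
  · rw [hreg.edgeSetGraph_degree_singleton he, hcard, show 2 * (r - 1) = 2 * r - 2 by omega]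
  · have : Nonempty {S : Finset (Sym2 V) // ↑S ⊆ G.edgeSet ∧ S.Nonempty} :=
      ⟨⟨{e}, by simpa using he, singleton_nonempty e⟩⟩
    refine le_antisymm ?_ ((edgeSetGraph G).minDegree_le_degree _)
    rw [hreg.edgeSetGraph_degree_singleton he]
    exact SimpleGraph.le_minDegree_of_forall_le_degree _ _ hreg.le_edgeSetGraph_degree
end

section
/- Let A be a finite set with |A| = n ≥ 1 and let G_{A^{(n)}} be its set-graph. Then every vertex v of G_{A^{(n)}} satisfies 2^{n−1} − 1 ≤ deg(v) ≤ 2(2^{n−1} − 1); moreover, the maximum degree of G_{A^{(n)}} equals twice its minimum degree, i.e., Δ(G_{A^{(n)}}) = 2·δ(G_{A^{(n)}}). -/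
open scoped Classical

/-- The *set-graph* of a finite nonempty set `A`: vertices are the nonempty subsets
of `A`, two distinct subsets being adjacent iff they have nonempty intersection. -/
def setGraph (A : Type*) : SimpleGraph {S : Finset A // S.Nonempty} where
  Adj S T := S ≠ T ∧ ∃ a, a ∈ S.1 ∧ a ∈ T.1
  symm := by
    constructor
    rintro S T ⟨hST, a, ha1, ha2⟩
    exact ⟨hST.symm, a, ha2, ha1⟩
  loopless := by constructor; rintro S ⟨h, -⟩; exact h rfl

/-! A vertex `S` with `|S| = k` meets every subset of `A` except the `2^(n-k)` subsets of its
complement, so its degree is `2^n - 2^(n-k) - 1`. This is smallest for singletons, where it is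
`2^(n-1) - 1`, and largest for `S = A`, where it is `2^n - 2 = 2(2^(n-1) - 1)`. -/

open Finset

theorem Finset.card_filter_not_disjoint {α : Type*} [Fintype α] (s : Finset α) :
    #{t : Finset α | ¬Disjoint s t} = 2 ^ Fintype.card α - 2 ^ (Fintype.card α - #s) := by
  have hdisjoint : ({t | Disjoint s t} : Finset (Finset α)) = sᶜ.powerset := by
    ext t
    simp [subset_compl_iff_disjoint_left]
  have := card_filter_add_card_filter_not (s := univ) (p := fun t : Finset α => Disjoint s t)
  rw [hdisjoint, card_powerset, card_compl, card_univ, Fintype.card_finset] at this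
  omega

namespace setGraph

variable {A : Type*}

theorem adj_iff {S T : {S : Finset A // S.Nonempty}} :
    (setGraph A).Adj S T ↔ S.1 ≠ T.1 ∧ ¬Disjoint S.1 T.1 := by
  simp [setGraph, Subtype.ext_iff, Finset.not_disjoint_iff]

variable [Fintype A]

theorem map_neighborFinset (S : {S : Finset A // S.Nonempty}) :
    ((setGraph A).neighborFinset S).map (Function.Embedding.subtype _) =
      ({T | ¬Disjoint S.1 T} : Finset (Finset A)).erase S.1 := by
  ext T
  simp only [mem_map, SimpleGraph.mem_neighborFinset, adj_iff, Function.Embedding.coe_subtype,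
    mem_erase, mem_filter, mem_univ, true_and]
  constructor
  · rintro ⟨T, ⟨hne, hmeet⟩, rfl⟩
    exact ⟨hne.symm, hmeet⟩
  · rintro ⟨hne, hmeet⟩
    exact ⟨⟨T, (not_disjoint_iff_nonempty_inter.1 hmeet).mono inter_subset_right⟩,
      ⟨Ne.symm hne, hmeet⟩, rfl⟩

theorem degree_eq (S : {S : Finset A // S.Nonempty}) :
    (setGraph A).degree S = 2 ^ Fintype.card A - 2 ^ (Fintype.card A - #S.1) - 1 := by
  have hself : S.1 ∈ ({T | ¬Disjoint S.1 T} : Finset (Finset A)) := by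
    simpa using S.2.ne_empty
  rw [← SimpleGraph.card_neighborFinset_eq_degree, ← card_map, map_neighborFinset,
    card_erase_of_mem hself, card_filter_not_disjoint]

theorem le_degree (S : {S : Finset A // S.Nonempty}) :
    2 ^ (Fintype.card A - 1) - 1 ≤ (setGraph A).degree S := by
  have hpos : 1 ≤ #S.1 := card_pos.2 S.2
  have hle : #S.1 ≤ Fintype.card A := card_le_univ _
  have hpow : 2 ^ (Fintype.card A - #S.1) ≤ 2 ^ (Fintype.card A - 1) :=
    Nat.pow_le_pow_right two_pos (by omega)
  have hdouble := pow_sub_one_mul (M := ℕ) (n := Fintype.card A) (by omega) 2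
  rw [degree_eq]
  omega

theorem degree_le (S : {S : Finset A // S.Nonempty}) :
    (setGraph A).degree S ≤ 2 * (2 ^ (Fintype.card A - 1) - 1) := by
  have hle : 1 ≤ Fintype.card A := (card_pos.2 S.2).trans_le (card_le_univ _)
  have hdouble := pow_sub_one_mul (M := ℕ) (n := Fintype.card A) (by omega) 2
  have hone : 1 ≤ 2 ^ (Fintype.card A - #S.1) := Nat.one_le_two_pow
  rw [degree_eq]
  omega

theorem degree_singleton (a : A) :
    (setGraph A).degree ⟨{a}, singleton_nonempty a⟩ = 2 ^ (Fintype.card A - 1) - 1 := by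
  have hle : 1 ≤ Fintype.card A := Fintype.card_pos_iff.2 ⟨a⟩
  have hdouble := pow_sub_one_mul (M := ℕ) (n := Fintype.card A) (by omega) 2
  rw [degree_eq, card_singleton]
  omega

theorem degree_univ [Nonempty A] :
    (setGraph A).degree ⟨univ, univ_nonempty⟩ = 2 * (2 ^ (Fintype.card A - 1) - 1) := by
  have hle : 1 ≤ Fintype.card A := Fintype.card_pos
  have hdouble := pow_sub_one_mul (M := ℕ) (n := Fintype.card A) (by omega) 2
  rw [degree_eq, card_univ, Nat.sub_self, pow_zero]
  omega

theorem minDegree_eq : (setGraph A).minDegree = 2 ^ (Fintype.card A - 1) - 1 := by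
  rcases isEmpty_or_nonempty A with hA | ⟨⟨a⟩⟩
  · have : IsEmpty {S : Finset A // S.Nonempty} := ⟨fun S => hA.elim S.2.choose⟩
    simp
  · have : Nonempty {S : Finset A // S.Nonempty} := ⟨⟨{a}, singleton_nonempty a⟩⟩
    exact le_antisymm (degree_singleton a ▸ (setGraph A).minDegree_le_degree _)
      ((setGraph A).le_minDegree_of_forall_le_degree _ le_degree)

theorem maxDegree_eq : (setGraph A).maxDegree = 2 * (2 ^ (Fintype.card A - 1) - 1) := by
  refine le_antisymm ((setGraph A).maxDegree_le_of_forall_degree_le _ degree_le) ?_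
  rcases isEmpty_or_nonempty A with hA | hA
  · simp
  · rw [← degree_univ]
    exact (setGraph A).degree_le_maxDegree _

end setGraph

theorem stmt_19_general {A : Type*} [Fintype A] :
    (∀ v : {S : Finset A // S.Nonempty},
      2 ^ (Fintype.card A - 1) - 1 ≤ (setGraph A).degree v ∧
        (setGraph A).degree v ≤ 2 * (2 ^ (Fintype.card A - 1) - 1)) ∧
    (setGraph A).maxDegree = 2 * (setGraph A).minDegree := by
  rw [setGraph.maxDegree_eq, setGraph.minDegree_eq]
  exact ⟨fun v => ⟨setGraph.le_degree v, setGraph.degree_le v⟩, rfl⟩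

/-- For a finite set `A` with `|A| = n ≥ 1`, every vertex `v` of the set-graph of `A`
satisfies `2^(n-1) - 1 ≤ deg v ≤ 2(2^(n-1) - 1)`; moreover the maximum degree of the
set-graph equals twice its minimum degree. -/
theorem stmt_19 {A : Type*} [Fintype A] (hn : 1 ≤ Fintype.card A) :
    (∀ v : {S : Finset A // S.Nonempty},
      2 ^ (Fintype.card A - 1) - 1 ≤ (setGraph A).degree v ∧
        (setGraph A).degree v ≤ 2 * (2 ^ (Fintype.card A - 1) - 1)) ∧
    (setGraph A).maxDegree = 2 * (setGraph A).minDegree :=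
  stmt_19_general
end
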